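/- Let γ₁ = π₀α₀, γ₂ = π₀β₀, γ₅ = E(X), γ₆ = E(X²), γ₇ = E(X³), γ₈ = E(X⁴), and γ₄ = cov(X², Y²)/Var(X²) (the slope of the L² regression of Y² on X²). Assume Var(X²) = γ₈ − γ₆² > 0 and π₀β₀ ≠ 0 and γ₂ + 2γ₁(γ₇ − γ₅γ₆)/(γ₈ − γ₆²) ≠ 0. Then β₀ = γ₄ / (γ₂ + 2γ₁(γ₇ − γ₅γ₆)/(γ₈ − γ₆²)), π₀ = γ₂/β₀, and α₀ = γ₁/π₀. -/

import Mathlib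

/-!
As `Z ∈ {0, 1}`, `Y² = (1 - Z) ε*² + Z (α₀ + β₀ X + ε)²`, so independence of `Z` from `(X, ε*, ε)`
gives `E[Xᵏ Y²] = (1 - π₀) E[Xᵏ] E[ε*²] + π₀ E[Xᵏ (α₀ + β₀ X + ε)²]`. Expanding the square, the
cross term vanishes because `ε` is centred and independent of `X`, and the noise variances cancel
in `cov(X², Y²) = E[X² Y²] - E[X²] E[Y²]`, leaving
`cov(X², Y²) = π₀ β₀ (β₀ Var(X²) + 2 α₀ cov(X², X))`, that is,
`γ₄ = β₀ (γ₂ + 2 γ₁ (γ₇ - γ₅ γ₆) / (γ₈ - γ₆²))`.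
-/

open MeasureTheory ProbabilityTheory

section

variable {Ω : Type*} [MeasurableSpace Ω] {μ : Measure Ω}

lemma MeasureTheory.MemLp.integrable_pow_of_le [IsFiniteMeasure μ] {X : Ω → ℝ} {p : ℕ}
    (hX : MemLp X p μ) {n : ℕ} (hn : n ≤ p) : Integrable (fun ω => X ω ^ n) μ :=
  (hX.mono_exponent (by exact_mod_cast hn)).integrable_norm_pow'.mono'
    (hX.aestronglyMeasurable.pow n) (.of_forall fun ω => by simp [norm_pow])

lemma ProbabilityTheory.IndepFun.integrable_and_integral_pow_mul_affine_add_sq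
    [IsFiniteMeasure μ] {X ε : Ω → ℝ} (hind : IndepFun X ε μ) (hε : MemLp ε 2 μ)
    (hε0 : ∫ ω, ε ω ∂μ = 0) (α β : ℝ) {k : ℕ} (h0 : Integrable (fun ω => X ω ^ k) μ)
    (h1 : Integrable (fun ω => X ω ^ (k + 1)) μ) (h2 : Integrable (fun ω => X ω ^ (k + 2)) μ) :
    Integrable (fun ω => X ω ^ k * (α + β * X ω + ε ω) ^ 2) μ ∧
      ∫ ω, X ω ^ k * (α + β * X ω + ε ω) ^ 2 ∂μ
        = α ^ 2 * ∫ ω, X ω ^ k ∂μ + 2 * α * β * ∫ ω, X ω ^ (k + 1) ∂μ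
          + β ^ 2 * ∫ ω, X ω ^ (k + 2) ∂μ + (∫ ω, X ω ^ k ∂μ) * ∫ ω, ε ω ^ 2 ∂μ := by
  have hsignal : Integrable (fun ω => α ^ 2 * X ω ^ k + 2 * α * β * X ω ^ (k + 1)
      + β ^ 2 * X ω ^ (k + 2)) μ :=
    ((h0.const_mul _).add (h1.const_mul _)).add (h2.const_mul _)
  have hind_noise : IndepFun (fun ω => X ω ^ k) (fun ω => ε ω ^ 2) μ :=
    hind.comp (measurable_id.pow_const k) (measurable_id.pow_const 2)
  have hnoise : Integrable (fun ω => X ω ^ k * ε ω ^ 2) μ :=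
    hind_noise.integrable_mul h0 hε.integrable_sq
  have hind_cross : IndepFun (fun ω => 2 * (α * X ω ^ k + β * X ω ^ (k + 1))) ε μ :=
    hind.comp (φ := fun x => 2 * (α * x ^ k + β * x ^ (k + 1))) (by fun_prop) measurable_id
  have hcross_left : Integrable (fun ω => 2 * (α * X ω ^ k + β * X ω ^ (k + 1))) μ :=
    ((h0.const_mul α).add (h1.const_mul β)).const_mul 2
  have hcross : Integrable (fun ω => 2 * (α * X ω ^ k + β * X ω ^ (k + 1)) * ε ω) μ :=
    hind_cross.integrable_mul hcross_left (hε.integrable one_le_two)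
  have hexpand : (fun ω => X ω ^ k * (α + β * X ω + ε ω) ^ 2) = fun ω =>
      (α ^ 2 * X ω ^ k + 2 * α * β * X ω ^ (k + 1) + β ^ 2 * X ω ^ (k + 2))
        + X ω ^ k * ε ω ^ 2 + 2 * (α * X ω ^ k + β * X ω ^ (k + 1)) * ε ω := by
    funext ω; ring
  have hsignal_noise : Integrable (fun ω => α ^ 2 * X ω ^ k + 2 * α * β * X ω ^ (k + 1)
      + β ^ 2 * X ω ^ (k + 2) + X ω ^ k * ε ω ^ 2) μ := hsignal.add hnoise
  refine ⟨hexpand ▸ hsignal_noise.add hcross, ?_⟩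
  rw [hexpand, integral_add hsignal_noise hcross, integral_add hsignal hnoise,
    integral_add (by exact (h0.const_mul _).add (h1.const_mul _)) (h2.const_mul _),
    integral_add (h0.const_mul _) (h1.const_mul _), integral_const_mul, integral_const_mul,
    integral_const_mul,
    hind_noise.integral_fun_mul_eq_mul_integral h0.aestronglyMeasurable
      hε.integrable_sq.aestronglyMeasurable,
    hind_cross.integral_fun_mul_eq_mul_integral hcross_left.aestronglyMeasurable
      hε.aestronglyMeasurable, hε0, mul_zero, add_zero]

variable [IsProbabilityMeasure μ]

lemma integral_mixture {β : Type*} [MeasurableSpace β] {Z : Ω → ℝ} {W : Ω → β} {f g : β → ℝ}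
    (hZ : Integrable Z μ) (hind : IndepFun Z W μ) (hf : Measurable f) (hg : Measurable g)
    (hfW : Integrable (fun ω => f (W ω)) μ) (hgW : Integrable (fun ω => g (W ω)) μ) :
    ∫ ω, ((1 - Z ω) * f (W ω) + Z ω * g (W ω)) ∂μ
      = (1 - ∫ ω, Z ω ∂μ) * ∫ ω, f (W ω) ∂μ + (∫ ω, Z ω ∂μ) * ∫ ω, g (W ω) ∂μ := by
  have h1Z : Integrable (fun ω => 1 - Z ω) μ := (integrable_const 1).sub hZ
  have hind_f : IndepFun (fun ω => 1 - Z ω) (fun ω => f (W ω)) μ :=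
    hind.comp (measurable_const.sub measurable_id) hf
  have hind_g : IndepFun Z (fun ω => g (W ω)) μ := hind.comp measurable_id hg
  have hint_f : Integrable (fun ω => (1 - Z ω) * f (W ω)) μ := hind_f.integrable_mul h1Z hfW
  have hint_g : Integrable (fun ω => Z ω * g (W ω)) μ := hind_g.integrable_mul hZ hgW
  rw [integral_add hint_f hint_g,
    hind_f.integral_fun_mul_eq_mul_integral h1Z.aestronglyMeasurable hfW.aestronglyMeasurable,
    hind_g.integral_fun_mul_eq_mul_integral hZ.aestronglyMeasurable hgW.aestronglyMeasurable,
    integral_sub (integrable_const 1) hZ]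
  simp

lemma integral_pow_mul_sq_of_mixture {X Z εstar ε Y : Ω → ℝ} {π₀ α₀ β₀ : ℝ}
    (hZ : Integrable Z μ) (hZ01 : ∀ ω, Z ω = 0 ∨ Z ω = 1) (hZmean : ∫ ω, Z ω ∂μ = π₀)
    (hεstar : MemLp εstar 2 μ) (hε : MemLp ε 2 μ) (hε0 : ∫ ω, ε ω ∂μ = 0)
    (hindZ : IndepFun Z (fun ω => (X ω, εstar ω, ε ω)) μ)
    (hindXεstar : IndepFun X εstar μ) (hindXε : IndepFun X ε μ)
    (hY : ∀ ω, Y ω = (1 - Z ω) * εstar ω + Z ω * (α₀ + β₀ * X ω + ε ω))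
    {k : ℕ} (h0 : Integrable (fun ω => X ω ^ k) μ)
    (h1 : Integrable (fun ω => X ω ^ (k + 1)) μ) (h2 : Integrable (fun ω => X ω ^ (k + 2)) μ) :
    ∫ ω, X ω ^ k * Y ω ^ 2 ∂μ
      = (1 - π₀) * ((∫ ω, X ω ^ k ∂μ) * ∫ ω, εstar ω ^ 2 ∂μ)
        + π₀ * (α₀ ^ 2 * ∫ ω, X ω ^ k ∂μ + 2 * α₀ * β₀ * ∫ ω, X ω ^ (k + 1) ∂μ
          + β₀ ^ 2 * ∫ ω, X ω ^ (k + 2) ∂μ + (∫ ω, X ω ^ k ∂μ) * ∫ ω, ε ω ^ 2 ∂μ) := by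
  obtain ⟨htreated, htreated_eq⟩ :=
    hindXε.integrable_and_integral_pow_mul_affine_add_sq hε hε0 α₀ β₀ h0 h1 h2
  have hind_untreated : IndepFun (fun ω => X ω ^ k) (fun ω => εstar ω ^ 2) μ :=
    hindXεstar.comp (measurable_id.pow_const k) (measurable_id.pow_const 2)
  have huntreated : Integrable (fun ω => X ω ^ k * εstar ω ^ 2) μ :=
    hind_untreated.integrable_mul h0 hεstar.integrable_sq
  have hsplit : ∀ ω, X ω ^ k * Y ω ^ 2 = (1 - Z ω) * (X ω ^ k * εstar ω ^ 2)
      + Z ω * (X ω ^ k * (α₀ + β₀ * X ω + ε ω) ^ 2) := by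
    intro ω
    rcases hZ01 ω with h | h <;> rw [hY ω, h] <;> ring
  simp only [hsplit]
  rw [integral_mixture (W := fun ω => (X ω, εstar ω, ε ω))
      (f := fun w => w.1 ^ k * w.2.1 ^ 2) (g := fun w => w.1 ^ k * (α₀ + β₀ * w.1 + w.2.2) ^ 2)
      hZ hindZ (by fun_prop) (by fun_prop) huntreated htreated,
    hZmean, htreated_eq, hind_untreated.integral_fun_mul_eq_mul_integral h0.aestronglyMeasurable
      hεstar.integrable_sq.aestronglyMeasurable]

end

theorem method_of_moments_identification_general
    {Ω : Type*} [MeasurableSpace Ω] (μ : Measure Ω) [IsProbabilityMeasure μ]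
    (X Z εstar ε Y : Ω → ℝ) (π₀ α₀ β₀ γ₁ γ₂ γ₄ γ₅ γ₆ γ₇ γ₈ : ℝ)
    (hZ : Measurable Z)
    (hπ₀ : π₀ ∈ Set.Ioc (0 : ℝ) 1) (hβ₀ : β₀ ≠ 0)
    (hZ01 : ∀ ω, Z ω = 0 ∨ Z ω = 1)
    (hZmean : ∫ ω, Z ω ∂μ = π₀)
    (hXL4 : MemLp X 4 μ)
    (hεstarL2 : MemLp εstar 2 μ) (hεL2 : MemLp ε 2 μ)
    (hε0 : ∫ ω, ε ω ∂μ = 0)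
    (hindZ : IndepFun Z (fun ω => (X ω, εstar ω, ε ω)) μ)
    (hindXεstar : IndepFun X εstar μ) (hindXε : IndepFun X ε μ)
    (hY : ∀ ω, Y ω = (1 - Z ω) * εstar ω + Z ω * (α₀ + β₀ * X ω + ε ω))
    (hγ1 : γ₁ = π₀ * α₀) (hγ2 : γ₂ = π₀ * β₀)
    (hγ5 : γ₅ = ∫ ω, X ω ∂μ) (hγ6 : γ₆ = ∫ ω, (X ω) ^ 2 ∂μ)
    (hγ7 : γ₇ = ∫ ω, (X ω) ^ 3 ∂μ) (hγ8 : γ₈ = ∫ ω, (X ω) ^ 4 ∂μ)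
    (hvar : 0 < γ₈ - γ₆ ^ 2)
    (hγ4 : γ₄ = ((∫ ω, (X ω) ^ 2 * (Y ω) ^ 2 ∂μ)
        - (∫ ω, (X ω) ^ 2 ∂μ) * (∫ ω, (Y ω) ^ 2 ∂μ)) / (γ₈ - γ₆ ^ 2))
    (hden : γ₂ + 2 * γ₁ * (γ₇ - γ₅ * γ₆) / (γ₈ - γ₆ ^ 2) ≠ 0) :
    β₀ = γ₄ / (γ₂ + 2 * γ₁ * (γ₇ - γ₅ * γ₆) / (γ₈ - γ₆ ^ 2)) ∧
      π₀ = γ₂ / β₀ ∧ α₀ = γ₁ / π₀ := by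
  have hXpow (n : ℕ) (hn : n ≤ 4) : Integrable (fun ω => X ω ^ n) μ :=
    MemLp.integrable_pow_of_le (p := 4) (by exact_mod_cast hXL4) hn
  have hZint : Integrable Z μ := .of_bound hZ.aestronglyMeasurable 1
    (.of_forall fun ω => by rcases hZ01 ω with h | h <;> simp [h])
  have hmoment (k : ℕ) (hk : k ≤ 2) := integral_pow_mul_sq_of_mixture hZint hZ01 hZmean hεstarL2
    hεL2 hε0 hindZ hindXεstar hindXε hY (hXpow k (by omega)) (hXpow (k + 1) (by omega))
    (hXpow (k + 2) (by omega))
  have hEY2 := hmoment 0 (Nat.zero_le 2)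
  have hEX2Y2 := hmoment 2 le_rfl
  simp only [pow_zero, one_mul, zero_add, pow_one, integral_const, probReal_univ, smul_eq_mul,
    mul_one] at hEY2
  norm_num only at hEX2Y2
  have hkey : γ₄ = β₀ * (γ₂ + 2 * γ₁ * (γ₇ - γ₅ * γ₆) / (γ₈ - γ₆ ^ 2)) := by
    rw [hγ4, hEX2Y2, hEY2, ← hγ5, ← hγ6, ← hγ7, ← hγ8, hγ1, hγ2]
    field_simp
    ring
  refine ⟨?_, ?_, ?_⟩
  · rw [hkey, mul_div_cancel_right₀ _ hden]
  · rw [hγ2, mul_div_cancel_right₀ _ hβ₀]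
  · rw [hγ1, mul_div_cancel_left₀ _ hπ₀.1.ne']

/-- Method-of-moments identification of `(α₀, β₀, π₀)`: with `γ₁ = π₀α₀`, `γ₂ = π₀β₀`,
`γ₅,…,γ₈` the first four moments of `X`, and `γ₄ = cov(X²,Y²)/Var(X²)`, if
`Var(X²) > 0`, `π₀β₀ ≠ 0` and `γ₂ + 2γ₁(γ₇ − γ₅γ₆)/(γ₈ − γ₆²) ≠ 0`, then
`β₀ = γ₄/(γ₂ + 2γ₁(γ₇ − γ₅γ₆)/(γ₈ − γ₆²))`, `π₀ = γ₂/β₀` and `α₀ = γ₁/π₀`. -/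
theorem method_of_moments_identification
    {Ω : Type*} [MeasurableSpace Ω] (μ : Measure Ω) [IsProbabilityMeasure μ]
    (X Z εstar ε Y : Ω → ℝ) (π₀ α₀ β₀ γ₁ γ₂ γ₄ γ₅ γ₆ γ₇ γ₈ : ℝ)
    (hX : Measurable X) (hZ : Measurable Z) (hεstar : Measurable εstar) (hε : Measurable ε)
    (hπ₀ : π₀ ∈ Set.Ioc (0 : ℝ) 1) (hβ₀ : β₀ ≠ 0)
    (hZ01 : ∀ ω, Z ω = 0 ∨ Z ω = 1)
    (hZmean : ∫ ω, Z ω ∂μ = π₀)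
    (hXL4 : MemLp X 4 μ)
    (hεstarL2 : MemLp εstar 2 μ) (hεL2 : MemLp ε 2 μ)
    (hεstar0 : ∫ ω, εstar ω ∂μ = 0) (hε0 : ∫ ω, ε ω ∂μ = 0)
    (hindZ : IndepFun Z (fun ω => (X ω, εstar ω, ε ω)) μ)
    (hindXεstar : IndepFun X εstar μ) (hindXε : IndepFun X ε μ)
    (hY : ∀ ω, Y ω = (1 - Z ω) * εstar ω + Z ω * (α₀ + β₀ * X ω + ε ω))
    (hγ1 : γ₁ = π₀ * α₀) (hγ2 : γ₂ = π₀ * β₀)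
    (hγ5 : γ₅ = ∫ ω, X ω ∂μ) (hγ6 : γ₆ = ∫ ω, (X ω) ^ 2 ∂μ)
    (hγ7 : γ₇ = ∫ ω, (X ω) ^ 3 ∂μ) (hγ8 : γ₈ = ∫ ω, (X ω) ^ 4 ∂μ)
    (hvar : 0 < γ₈ - γ₆ ^ 2)
    (hγ4 : γ₄ = ((∫ ω, (X ω) ^ 2 * (Y ω) ^ 2 ∂μ)
        - (∫ ω, (X ω) ^ 2 ∂μ) * (∫ ω, (Y ω) ^ 2 ∂μ)) / (γ₈ - γ₆ ^ 2))
    (hden : γ₂ + 2 * γ₁ * (γ₇ - γ₅ * γ₆) / (γ₈ - γ₆ ^ 2) ≠ 0) :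
    β₀ = γ₄ / (γ₂ + 2 * γ₁ * (γ₇ - γ₅ * γ₆) / (γ₈ - γ₆ ^ 2)) ∧
      π₀ = γ₂ / β₀ ∧ α₀ = γ₁ / π₀ :=
  method_of_moments_identification_general μ X Z εstar ε Y π₀ α₀ β₀ γ₁ γ₂ γ₄ γ₅ γ₆ γ₇ γ₈ hZ hπ₀ hβ₀
    hZ01 hZmean hXL4 hεstarL2 hεL2 hε0 hindZ hindXεstar hindXε hY hγ1 hγ2 hγ5 hγ6 hγ7 hγ8 hvar hγ4
    hden
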